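/- Let p \geq 5 be a prime. The equation y^{p^2-1} + z^{p^2-1} + 1 = 0 has no solution with y, z \in \mathbb{F}_{p^4}^*. Consequently, for all nonzero u, v \in \mathbb{F}_{p^4}, the map x \mapsto 2uv\, x^{p^2} + (2uv^{p^2} + 2u^{p^2}v)\, x is a bijection of \mathbb{F}_{p^4}, i.e. the monomial x^{2+p^2} is 2-PN over \mathbb{F}_{p^4}. -/

import Mathlib

/-!
Write `q = p ^ 2`, so `|F| = q ^ 2`. Every `a = y ^ (q - 1)` satisfies `a ^ (q + 1) = 1`, i.e.
`a ^ q = a⁻¹`. If `a + b + 1 = 0` for two such elements, applying Frobenius gives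
`a⁻¹ + b⁻¹ + 1 = 0`, hence `a * b = 1` and `a` is a root of `X ^ 2 + X + 1`, so `a ^ 3 = 1`.
As `q ≡ 1 [MOD 3]`, then `a ^ 2 = a ^ (q + 1) = 1`, forcing `a = 1` and `3 = 0`, impossible
for `p ≥ 5`. The map `x ↦ 2uv x ^ q + (2uv ^ q + 2u ^ q v) x` is additive, and a nonzero `x` in
its kernel would give `(u / x) ^ (q - 1) + (v / x) ^ (q - 1) + 1 = 0`.
-/

section ExpChar

variable {R : Type*} [CommRing R] {p n : ℕ} [ExpChar R p]

theorem sq_add_self_add_one_eq_zero_of_pow_succ_eq_one {a b : R} (ha : a ^ (p ^ n + 1) = 1)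
    (hb : b ^ (p ^ n + 1) = 1) (hab : a + b + 1 = 0) : a ^ 2 + a + 1 = 0 := by
  have hfrob : a ^ p ^ n + b ^ p ^ n + 1 = 0 := by
    have := congrArg (iterateFrobenius R p n) hab
    rwa [map_add, map_add, map_one, map_zero, iterateFrobenius_def, iterateFrobenius_def] at this
  rw [pow_succ] at ha hb
  linear_combination (a + 1) * hab - a * b * hfrob + b * ha + a * hb

theorem bijective_mul_pow_add_mul [Finite R] {c d : R}
    (hker : ∀ x : R, c * x ^ p ^ n + d * x = 0 → x = 0) :
    Function.Bijective (fun x : R => c * x ^ p ^ n + d * x) := by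
  rw [← Finite.injective_iff_bijective]
  intro x y hxy
  refine sub_eq_zero.mp (hker _ ?_)
  rw [sub_pow_expChar_pow]
  linear_combination hxy

end ExpChar

theorem three_eq_zero_of_sq_add_self_add_one_eq_zero {R : Type*} [CommRing R] {a : R} {q : ℕ}
    (hq : q % 3 = 1) (ha : a ^ (q + 1) = 1) (h : a ^ 2 + a + 1 = 0) : (3 : R) = 0 := by
  have hcube : a ^ 3 = 1 := by linear_combination (a - 1) * h
  have hsq : a ^ 2 = 1 := by
    rwa [← Nat.div_add_mod q 3, hq, add_assoc, pow_add, pow_mul, hcube, one_pow, one_mul] at ha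
  have hone : a = 1 := by linear_combination hcube - a * hsq
  linear_combination h + (-a - 2) * hone

section FiniteField

variable {K : Type*} [Field K] [Fintype K]

theorem pow_sub_one_pow_add_one_eq_one {q : ℕ} (hK : Fintype.card K = q ^ 2) {y : K} (hy : y ≠ 0) :
    (y ^ (q - 1)) ^ (q + 1) = 1 := by
  rw [← pow_mul, mul_comm, ← Nat.sq_sub_sq, one_pow, ← hK]
  exact FiniteField.pow_card_sub_one_eq_one y hy

variable {p n : ℕ} [ExpChar K p] (hK : Fintype.card K = (p ^ n) ^ 2) (h3 : (3 : K) ≠ 0)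
  (hq : p ^ n % 3 = 1)
include hK h3 hq

theorem pow_sub_one_add_pow_sub_one_add_one_ne_zero {y z : K} (hy : y ≠ 0) (hz : z ≠ 0) :
    y ^ (p ^ n - 1) + z ^ (p ^ n - 1) + 1 ≠ 0 := fun h =>
  h3 <| three_eq_zero_of_sq_add_self_add_one_eq_zero hq (pow_sub_one_pow_add_one_eq_one hK hy) <|
    sq_add_self_add_one_eq_zero_of_pow_succ_eq_one (pow_sub_one_pow_add_one_eq_one hK hy)
      (pow_sub_one_pow_add_one_eq_one hK hz) h

theorem mul_pow_add_mul_ne_zero {u v x : K} (hu : u ≠ 0) (hv : v ≠ 0) (hx : x ≠ 0) :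
    u * v * x ^ p ^ n + (u * v ^ p ^ n + u ^ p ^ n * v) * x ≠ 0 := by
  obtain ⟨m, hm⟩ : ∃ m, p ^ n = m + 1 := Nat.exists_eq_add_one.mpr (expChar_pow_pos K p n)
  have hfactor : u * v * x ^ p ^ n + (u * v ^ p ^ n + u ^ p ^ n * v) * x =
      u * v * x ^ p ^ n * ((u / x) ^ m + (v / x) ^ m + 1) := by
    rw [hm, div_pow, div_pow]; field_simp; ring
  have hsum := pow_sub_one_add_pow_sub_one_add_one_ne_zero hK h3 hq (div_ne_zero hu hx)
    (div_ne_zero hv hx)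
  rw [hm, Nat.add_sub_cancel] at hsum
  rw [hfactor]
  exact mul_ne_zero (by simp [hu, hv, hx]) hsum

end FiniteField

theorem twoPN_two_add_p_sq (p : ℕ) (hp : p.Prime) (hp5 : 5 ≤ p)
    (F : Type) [Field F] [Fintype F] (hF : Fintype.card F = p^4) :
    (¬ ∃ y z : F, y ≠ 0 ∧ z ≠ 0 ∧ y^(p^2-1) + z^(p^2-1) + 1 = 0) ∧
    (∀ u v : F, u ≠ 0 → v ≠ 0 →
      Function.Bijective (fun x : F =>
        2*u*v*x^(p^2) + (2*u*v^(p^2) + 2*u^(p^2)*v)*x)) := by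
  have : Fact p.Prime := ⟨hp⟩
  have : CharP F p := charP_of_card_eq_prime_pow hF
  have hK : Fintype.card F = (p ^ 2) ^ 2 := by rw [hF, ← pow_mul]
  have h2 : (2 : F) ≠ 0 := by
    exact_mod_cast CharP.cast_ne_zero_of_ne_of_prime F Nat.prime_two (by omega)
  have h3 : (3 : F) ≠ 0 := by
    exact_mod_cast CharP.cast_ne_zero_of_ne_of_prime F Nat.prime_three (by omega)
  have hq : p ^ 2 % 3 = 1 := by
    have := Nat.ModEq.pow_totient ((Nat.coprime_primes hp Nat.prime_three).mpr (by omega))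
    rwa [Nat.totient_prime Nat.prime_three] at this
  refine ⟨fun ⟨y, z, hy, hz, h⟩ => pow_sub_one_add_pow_sub_one_add_one_ne_zero hK h3 hq hy hz h,
    fun u v hu hv => bijective_mul_pow_add_mul fun x hx => ?_⟩
  by_contra hx0
  have hdouble : (2 : F) * (u * v * x ^ p ^ 2 + (u * v ^ p ^ 2 + u ^ p ^ 2 * v) * x) = 0 := by
    linear_combination hx
  exact mul_pow_add_mul_ne_zero hK h3 hq hu hv hx0 ((mul_eq_zero.mp hdouble).resolve_left h2)
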